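/- For the logarithmic cost c(p,q') = (1/α) log(1 + α p·q') on (0,∞)ⁿ × (0,∞)ⁿ, the Riemann curvature of the Kim–McCann metric satisfies R̄_{ij̄k̄ℓ} = (α/2)(c_{i:j̄} c_{ℓ:k̄} + c_{i:k̄} c_{ℓ:j̄}) at every point. -/

import Mathlib

/-!
Writing `D = 1 + α p·q'`, one has `c_i = q'_i / D`, hence `c_{iℓ} = -α c_i c_ℓ`. Differentiating
once in `q'` shows that `c_{iℓ:β̄} = -α (c_ℓ c_{i:β̄} + c_i c_{ℓ:β̄})` is a combination of two rows of
the matrix `c_{·:·̄}`, so contracting it with the inverse matrix `c^{β̄:α}` just gives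
`-α (c_ℓ c_{i:j̄k̄} + c_i c_{ℓ:j̄k̄})`. Differentiating twice, the Leibniz rule writes `c_{iℓ:j̄k̄}` as
these two terms plus `-α (c_{i:j̄} c_{ℓ:k̄} + c_{i:k̄} c_{ℓ:j̄})`, and only the latter survives in `R̄`.
-/

noncomputable def pd1 {n : ℕ} (F : (Fin n → ℝ) → (Fin n → ℝ) → ℝ) (i : Fin n) :
    (Fin n → ℝ) → (Fin n → ℝ) → ℝ :=
  fun x y => fderiv ℝ (fun x' => F x' y) x (Pi.single i 1)

noncomputable def pd2 {n : ℕ} (F : (Fin n → ℝ) → (Fin n → ℝ) → ℝ) (j : Fin n) :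
    (Fin n → ℝ) → (Fin n → ℝ) → ℝ :=
  fun x y => fderiv ℝ (fun y' => F x y') y (Pi.single j 1)

open Finset Topology Function
open scoped ContDiff

section PartialDerivatives

variable {n : ℕ} {F : (Fin n → ℝ) → (Fin n → ℝ) → ℝ} {Ω : Set ((Fin n → ℝ) × (Fin n → ℝ))}
  {x y : Fin n → ℝ}

lemma pd1_eq_of_eqOn_of_hasFDerivAt {G : (Fin n → ℝ) → ℝ} {G' : (Fin n → ℝ) →L[ℝ] ℝ}
    (hΩ : IsOpen Ω) (hxy : (x, y) ∈ Ω) (hFG : ∀ x', (x', y) ∈ Ω → F x' y = G x')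
    (hG : HasFDerivAt G G' x) (i : Fin n) : pd1 F i x y = G' (Pi.single i 1) := by
  have hev : (fun x' => F x' y) =ᶠ[𝓝 x] G := by
    filter_upwards [(hΩ.preimage (by fun_prop : Continuous fun x' => (x', y))).mem_nhds hxy]
      with x' hx' using hFG x' hx'
  rw [pd1, hev.fderiv_eq, hG.fderiv]

lemma pd2_eq_of_eqOn_of_hasFDerivAt {G : (Fin n → ℝ) → ℝ} {G' : (Fin n → ℝ) →L[ℝ] ℝ}
    (hΩ : IsOpen Ω) (hxy : (x, y) ∈ Ω) (hFG : ∀ y', (x, y') ∈ Ω → F x y' = G y')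
    (hG : HasFDerivAt G G' y) (j : Fin n) : pd2 F j x y = G' (Pi.single j 1) := by
  have hev : (fun y' => F x y') =ᶠ[𝓝 y] G := by
    filter_upwards [(hΩ.preimage (by fun_prop : Continuous fun y' => (x, y'))).mem_nhds hxy]
      with y' hy' using hFG y' hy'
  rw [pd2, hev.fderiv_eq, hG.fderiv]

lemma ContDiffOn.pd1 (hF : ContDiffOn ℝ ∞ (uncurry F) Ω) (hΩ : IsOpen Ω) (i : Fin n) :
    ContDiffOn ℝ ∞ (uncurry (pd1 F i)) Ω := by
  intro z hz
  have hFz : ContDiffAt ℝ ∞ (uncurry F) z := hF.contDiffAt (hΩ.mem_nhds hz)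
  have hslice : ContDiffAt ℝ ∞ (fun w : _ × _ => fderiv ℝ (fun x' => F x' w.2) w.1) z :=
    ContDiffAt.fderiv (f := fun w x' => F x' w.2)
      (hFz.comp (z, z.1) (by fun_prop : ContDiffAt ℝ ∞ (fun w : _ × _ => (w.2, w.1.2)) (z, z.1)))
      contDiffAt_fst le_rfl
  exact (hslice.clm_apply contDiffAt_const).contDiffWithinAt

lemma ContDiffOn.pd2 (hF : ContDiffOn ℝ ∞ (uncurry F) Ω) (hΩ : IsOpen Ω) (j : Fin n) :
    ContDiffOn ℝ ∞ (uncurry (pd2 F j)) Ω := by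
  intro z hz
  have hFz : ContDiffAt ℝ ∞ (uncurry F) z := hF.contDiffAt (hΩ.mem_nhds hz)
  have hslice : ContDiffAt ℝ ∞ (fun w : _ × _ => fderiv ℝ (fun y' => F w.1 y') w.2) z :=
    ContDiffAt.fderiv (f := fun w y' => F w.1 y')
      (hFz.comp (z, z.2) (by fun_prop : ContDiffAt ℝ ∞ (fun w : _ × _ => (w.1.1, w.2)) (z, z.2)))
      contDiffAt_snd le_rfl
  exact (hslice.clm_apply contDiffAt_const).contDiffWithinAt

lemma ContDiffOn.hasFDerivAt_right (hF : ContDiffOn ℝ ∞ (uncurry F) Ω) (hΩ : IsOpen Ω)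
    (hxy : (x, y) ∈ Ω) : HasFDerivAt (fun y' => F x y') (fderiv ℝ (fun y' => F x y') y) y := by
  have hFxy : DifferentiableAt ℝ (uncurry F) (x, y) :=
    (hF.contDiffAt (hΩ.mem_nhds hxy)).differentiableAt (by simp)
  exact (hFxy.comp y (by fun_prop : DifferentiableAt ℝ (fun y' => (x, y')) y)).hasFDerivAt

lemma fderiv_apply_single_eq_pd2 (j : Fin n) :
    fderiv ℝ (fun y' => F x y') y (Pi.single j 1) = pd2 F j x y := rfl

end PartialDerivatives

lemma Matrix.sum_sum_rowComb_mul_mul_of_mul_eq_one {m R : Type*} [Fintype m] [DecidableEq m]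
    [CommSemiring R] {A B : Matrix m m R} (h : A * B = 1) (u v : R) (i l : m) (C : m → R) :
    ∑ β, ∑ a, (u * A i β + v * A l β) * B β a * C a = u * C i + v * C l := by
  calc ∑ β, ∑ a, (u * A i β + v * A l β) * B β a * C a
      = ∑ a, (u * (A * B) i a + v * (A * B) l a) * C a := by
        rw [sum_comm]
        simp only [Matrix.mul_apply, mul_sum, sum_mul, add_mul, mul_assoc, sum_add_distrib]
    _ = u * C i + v * C l := by
        simp [h, Matrix.one_apply, add_mul, sum_add_distrib, ite_mul]

section LogCost

variable {n : ℕ} {α : ℝ} {c : (Fin n → ℝ) → (Fin n → ℝ) → ℝ} {x y : Fin n → ℝ}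

def logCostDomain (α : ℝ) : Set ((Fin n → ℝ) × (Fin n → ℝ)) :=
  {z | 0 < 1 + α * ∑ m, z.1 m * z.2 m}

lemma isOpen_logCostDomain : IsOpen (logCostDomain (n := n) α) :=
  isOpen_lt continuous_const (by fun_prop)

lemma mk_mem_logCostDomain (hα : 0 ≤ α) (hx : ∀ m, 0 ≤ x m) (hy : ∀ m, 0 ≤ y m) :
    (x, y) ∈ logCostDomain α := by
  have : 0 ≤ α * ∑ m, x m * y m := mul_nonneg hα (sum_nonneg fun m _ => mul_nonneg (hx m) (hy m))
  show 0 < 1 + α * ∑ m, x m * y m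
  linarith

lemma hasFDerivAt_one_add_mul_sum_mul (α : ℝ) (x y : Fin n → ℝ) :
    HasFDerivAt (fun x' => 1 + α * ∑ m, x' m * y m)
      (α • ∑ m, y m • ContinuousLinearMap.proj m : (Fin n → ℝ) →L[ℝ] ℝ) x :=
  ((HasFDerivAt.fun_sum fun m _ => (hasFDerivAt_apply m x).mul_const (y m)).const_mul α).const_add
    1

lemma sum_smul_proj_apply_single (y : Fin n → ℝ) (i : Fin n) :
    (∑ m, y m • ContinuousLinearMap.proj m : (Fin n → ℝ) →L[ℝ] ℝ) (Pi.single i 1) = y i := by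
  simp [Pi.single_apply]

variable (hc : ∀ p q', c p q' = (1 / α) * Real.log (1 + α * ∑ i, p i * q' i))
include hc

lemma contDiffOn_logCost : ContDiffOn ℝ ∞ (uncurry c) (logCostDomain α) := by
  have hc' : uncurry c = fun z => (1 / α) * Real.log (1 + α * ∑ m, z.1 m * z.2 m) :=
    funext fun z => hc z.1 z.2
  rw [hc']
  exact contDiffOn_const.mul ((ContDiff.contDiffOn (by fun_prop)).log fun z hz => hz.ne')

lemma pd1_logCost (hα : α ≠ 0) (hxy : (x, y) ∈ logCostDomain α) (i : Fin n) :
    pd1 c i x y = y i / (1 + α * ∑ m, x m * y m) := by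
  have hxy' : 1 + α * ∑ m, x m * y m ≠ 0 := ne_of_gt hxy
  rw [pd1_eq_of_eqOn_of_hasFDerivAt isOpen_logCostDomain hxy (fun x' _ => hc x' y)
    (((hasFDerivAt_one_add_mul_sum_mul α x y).log hxy').const_mul (1 / α))]
  simp only [smul_apply, sum_smul_proj_apply_single, smul_eq_mul]
  field_simp

lemma pd1_pd1_logCost (hα : α ≠ 0) (hxy : (x, y) ∈ logCostDomain α) (i l : Fin n) :
    pd1 (pd1 c i) l x y = -α * (pd1 c i x y * pd1 c l x y) := by
  have hxy' : 1 + α * ∑ m, x m * y m ≠ 0 := ne_of_gt hxy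
  have hinv := (hasDerivAt_inv hxy').comp_hasFDerivAt x (hasFDerivAt_one_add_mul_sum_mul α x y)
  rw [pd1_eq_of_eqOn_of_hasFDerivAt isOpen_logCostDomain hxy
    (fun x' hx' => (pd1_logCost hc hα hx' i).trans (div_eq_mul_inv _ _)) (hinv.const_mul (y i)),
    pd1_logCost hc hα hxy, pd1_logCost hc hα hxy]
  simp only [smul_apply, sum_smul_proj_apply_single, smul_eq_mul]
  field_simp

lemma pd2_pd1_pd1_logCost (hα : α ≠ 0) (hxy : (x, y) ∈ logCostDomain α) (i l j : Fin n) :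
    pd2 (pd1 (pd1 c i) l) j x y
      = -α * (pd2 (pd1 c i) j x y * pd1 c l x y + pd1 c i x y * pd2 (pd1 c l) j x y) := by
  have hΩ : IsOpen (logCostDomain (n := n) α) := isOpen_logCostDomain
  have hsmooth := contDiffOn_logCost hc
  have hi := (hsmooth.pd1 hΩ i).hasFDerivAt_right hΩ hxy
  have hl := (hsmooth.pd1 hΩ l).hasFDerivAt_right hΩ hxy
  rw [pd2_eq_of_eqOn_of_hasFDerivAt hΩ hxy
    (fun y' hy' => pd1_pd1_logCost hc hα hy' i l) ((hi.mul hl).const_mul (-α))]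
  simp only [smul_apply, add_apply, fderiv_apply_single_eq_pd2, smul_eq_mul]
  ring

lemma pd2_pd2_pd1_pd1_logCost (hα : α ≠ 0) (hxy : (x, y) ∈ logCostDomain α) (i l j k : Fin n) :
    pd2 (pd2 (pd1 (pd1 c i) l) j) k x y
      = -α * (pd2 (pd2 (pd1 c i) j) k x y * pd1 c l x y
          + pd2 (pd1 c i) j x y * pd2 (pd1 c l) k x y
          + pd2 (pd1 c i) k x y * pd2 (pd1 c l) j x y
          + pd1 c i x y * pd2 (pd2 (pd1 c l) j) k x y) := by
  have hΩ : IsOpen (logCostDomain (n := n) α) := isOpen_logCostDomain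
  have hsmooth := contDiffOn_logCost hc
  have hi := (hsmooth.pd1 hΩ i).hasFDerivAt_right hΩ hxy
  have hl := (hsmooth.pd1 hΩ l).hasFDerivAt_right hΩ hxy
  have hij := ((hsmooth.pd1 hΩ i).pd2 hΩ j).hasFDerivAt_right hΩ hxy
  have hlj := ((hsmooth.pd1 hΩ l).pd2 hΩ j).hasFDerivAt_right hΩ hxy
  rw [pd2_eq_of_eqOn_of_hasFDerivAt hΩ hxy
    (fun y' hy' => pd2_pd1_pd1_logCost hc hα hy' i l j)
    (((hij.mul hl).add (hi.mul hlj)).const_mul (-α))]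
  simp only [smul_apply, add_apply, fderiv_apply_single_eq_pd2, smul_eq_mul]
  ring

end LogCost

/-- for the logarithmic cost `c(p,q') = (1/α) log(1 + α p·q')` on the
positive orthant, the Riemann curvature of the Kim–McCann metric,
`R̄_{ij̄k̄ℓ} = (1/2)(−c_{iℓ:j̄k̄} + c_{iℓ:β̄}c^{β̄:α}c_{α:j̄k̄})`, satisfies
`R̄_{ij̄k̄ℓ} = (α/2)(c_{i:j̄} c_{ℓ:k̄} + c_{i:k̄} c_{ℓ:j̄})` at every point. -/
theorem log_cost_curvature {n : ℕ} (α : ℝ) (hα : 0 < α)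
    (c : (Fin n → ℝ) → (Fin n → ℝ) → ℝ)
    (hc : ∀ p q', c p q' = (1 / α) * Real.log (1 + α * ∑ i, p i * q' i))
    (cinv : (Fin n → ℝ) → (Fin n → ℝ) → Matrix (Fin n) (Fin n) ℝ)
    (hcinv : ∀ p q', (∀ i, 0 < p i) → (∀ i, 0 < q' i) →
      (Matrix.of fun i j => pd2 (pd1 c i) j p q') * cinv p q' = 1 ∧
      cinv p q' * (Matrix.of fun i j => pd2 (pd1 c i) j p q') = 1)
    (Rb : (Fin n → ℝ) → (Fin n → ℝ) → Fin n → Fin n → Fin n → Fin n → ℝ)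
    (hRb : ∀ p q' i j k l, Rb p q' i j k l
      = (1 / 2) * (-(pd2 (pd2 (pd1 (pd1 c i) l) j) k p q')
        + ∑ β, ∑ a, pd2 (pd1 (pd1 c i) l) β p q' * cinv p q' β a
            * pd2 (pd2 (pd1 c a) j) k p q')) :
    ∀ p q' : Fin n → ℝ, (∀ i, 0 < p i) → (∀ i, 0 < q' i) →
      ∀ i j k l : Fin n,
        Rb p q' i j k l = (α / 2) * (pd2 (pd1 c i) j p q' * pd2 (pd1 c l) k p q'
          + pd2 (pd1 c i) k p q' * pd2 (pd1 c l) j p q') := by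
  intro p q' hp hq' i j k l
  have hpq : (p, q') ∈ logCostDomain α :=
    mk_mem_logCostDomain hα.le (fun m => (hp m).le) (fun m => (hq' m).le)
  set A : Matrix (Fin n) (Fin n) ℝ := Matrix.of fun i j => pd2 (pd1 c i) j p q'
  have hrows : ∀ β, pd2 (pd1 (pd1 c i) l) β p q'
      = -α * pd1 c l p q' * A i β + -α * pd1 c i p q' * A l β := by
    intro β
    rw [pd2_pd1_pd1_logCost hc hα.ne' hpq]
    simp only [A, Matrix.of_apply]
    ring
  simp_rw [hRb, hrows]
  rw [Matrix.sum_sum_rowComb_mul_mul_of_mul_eq_one (hcinv p q' hp hq').1,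
    pd2_pd2_pd1_pd1_logCost hc hα.ne' hpq]
  ring
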